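/- arXiv:2110.13599 — 2 statements merged into one kernel-verified Lean document; each statement's English description precedes it below -/
import Mathlib

section
/- Let A, B, C be Hermitian involutions in a complex unital *-algebra (A² = B² = C² = 1) such that AB = (−1)^a BA for some a ∈ {0,1} and (AB)C = −C(AB). Set U = (1 + i^{1−a} AB)/√2. Then U is unitary and U* C U = i^{1−a} C A B. -/
/-- Lemma 1 of the paper: for Hermitian involutions A, B, C with AB = (−1)ᵃ BA
and {AB, C} = 0, the logical braid U = (1 + i^{1−a} AB)/√2 is unitary and
U* C U = i^{1−a} C A B. -/
theorem logical_braid_conjugation {𝒜 : Type*} [Ring 𝒜] [StarRing 𝒜] [Algebra ℂ 𝒜]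
    [StarModule ℂ 𝒜] (A B C : 𝒜)
    (hA : star A = A) (hB : star B = B) (hC : star C = C)
    (hA2 : A * A = 1) (hB2 : B * B = 1) (hC2 : C * C = 1)
    (a : ℕ) (ha : a ≤ 1)
    (hcomm : A * B = ((-1 : ℂ) ^ a) • (B * A))
    (hanti : (A * B) * C = -(C * (A * B)))
    (U : 𝒜) (hU : U = ((Real.sqrt 2 : ℂ))⁻¹ • (1 + (Complex.I ^ (1 - a)) • (A * B))) :
    U * star U = 1 ∧ star U * U = 1 ∧
      star U * C * U = (Complex.I ^ (1 - a)) • (C * A * B) := by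
  have hs : ((Real.sqrt 2 : ℂ))⁻¹ * ((Real.sqrt 2 : ℂ))⁻¹ = 2⁻¹ := by
    rw [← mul_inv]
    norm_cast
    rw [Real.mul_self_sqrt (by norm_num)]
    norm_num
  subst hU
  interval_cases a
  · -- a = 0 : A and B commute, ω = I
    simp only [pow_zero, one_smul] at hcomm
    simp only [Nat.sub_zero, pow_one]
    have hBA : B * A = A * B := hcomm.symm
    have hPP : (A * B) * (A * B) = 1 := by
      have : (A * B) * (A * B) = A * (B * A) * B := by noncomm_ring
      rw [this, hBA, ← mul_assoc, mul_assoc A A B, ← mul_assoc, hA2, one_mul, hB2]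
    have h2 : (A * B) * C * (A * B) = -C := by
      rw [hanti, neg_mul, mul_assoc, hPP, mul_one]
    have hstar : star (((Real.sqrt 2 : ℂ))⁻¹ • (1 + Complex.I • (A * B)))
        = ((Real.sqrt 2 : ℂ))⁻¹ • (1 - Complex.I • (A * B)) := by
      simp [star_smul, star_add, star_mul, hA, hB, Complex.star_def, map_inv₀,
        Complex.conj_ofReal, hBA, sub_eq_add_neg, neg_smul]
    rw [hstar]
    have hass : C * A * B = C * (A * B) := by rw [mul_assoc]
    refine ⟨?_, ?_, ?_⟩
    · simp only [smul_mul_assoc, mul_smul_comm, smul_smul, mul_add, add_mul, mul_sub,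
        sub_mul, one_mul, mul_one, smul_add, smul_sub, smul_neg, neg_smul]
      rw [hPP]
      match_scalars
      · linear_combination 2 * hs - ((Real.sqrt 2 : ℂ))⁻¹ ^ 2 * Complex.I_sq
      · ring
    · simp only [smul_mul_assoc, mul_smul_comm, smul_smul, mul_add, add_mul, mul_sub,
        sub_mul, one_mul, mul_one, smul_add, smul_sub, smul_neg, neg_smul]
      rw [hPP]
      match_scalars
      · linear_combination 2 * hs - ((Real.sqrt 2 : ℂ))⁻¹ ^ 2 * Complex.I_sq
      · ring
    · simp only [hass, smul_mul_assoc, mul_smul_comm, smul_smul, mul_add, add_mul, mul_sub,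
        sub_mul, one_mul, mul_one, smul_add, smul_sub, smul_neg, neg_smul]
      rw [h2, hanti]
      match_scalars
      · linear_combination ((Real.sqrt 2 : ℂ))⁻¹ ^ 2 * Complex.I_sq
      · linear_combination 2 * Complex.I * hs
  · -- a = 1 : A and B anticommute, ω = 1
    simp only [pow_one, neg_one_smul] at hcomm
    simp only [Nat.sub_self, pow_zero, one_smul]
    have hBA : B * A = -(A * B) := by rw [hcomm, neg_neg]
    have hPP : (A * B) * (A * B) = -1 := by
      have : (A * B) * (A * B) = A * (B * A) * B := by noncomm_ring
      rw [this, hBA, mul_neg, neg_mul, ← mul_assoc, mul_assoc A A B, ← mul_assoc, hA2,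
        one_mul, hB2]
    have h2 : (A * B) * C * (A * B) = C := by
      rw [hanti, neg_mul, mul_assoc, hPP, mul_neg_one, neg_neg]
    have hstar : star (((Real.sqrt 2 : ℂ))⁻¹ • (1 + A * B))
        = ((Real.sqrt 2 : ℂ))⁻¹ • (1 - A * B) := by
      simp [star_smul, star_add, star_mul, hA, hB, Complex.star_def, map_inv₀,
        Complex.conj_ofReal, hBA, sub_eq_add_neg]
    rw [hstar]
    have hass : C * A * B = C * (A * B) := by rw [mul_assoc]
    refine ⟨?_, ?_, ?_⟩
    · simp only [smul_mul_assoc, mul_smul_comm, smul_smul, mul_add, add_mul, mul_sub,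
        sub_mul, one_mul, mul_one, smul_add, smul_sub, smul_neg, neg_smul]
      rw [hPP]
      match_scalars
      · linear_combination 2 * hs
      · ring
    · simp only [smul_mul_assoc, mul_smul_comm, smul_smul, mul_add, add_mul, mul_sub,
        sub_mul, one_mul, mul_one, smul_add, smul_sub, smul_neg, neg_smul]
      rw [hPP]
      match_scalars
      · linear_combination 2 * hs
      · ring
    · simp only [hass, smul_mul_assoc, mul_smul_comm, smul_smul, mul_add, add_mul, mul_sub,
        sub_mul, one_mul, mul_one, smul_add, smul_sub, smul_neg, neg_smul]
      rw [h2, hanti]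
      match_scalars
      · ring
      · linear_combination 2 * hs
end

section
/- Let m, L, q ∈ ℕ with L ∣ m and L ≥ 1. Let positions p₁ < p₂ < … < p_{2q} in ZMod m come in consecutive pairs (p_{2j−1}, p_{2j}) with gaps b_j (the number of boundary positions strictly between p_{2j−1} and p_{2j}), and suppose Σ_j b_j < L. Then there exists an offset s ∈ Fin L such that for every j, the pair (p_{2j−1}, p_{2j}) lies in a single interval of the partition of ZMod m into m/L consecutive intervals of length L starting at offset s. -/
/-- Lemma 2 of the paper in d = 1: on the cyclic lattice ZMod m divided into
consecutive intervals of length L (L ∣ m) starting at offset s, if the gaps b_j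
of the q pairs satisfy Σ b_j < L, then some offset s ∈ Fin L places each pair
inside a single interval.  The interval (at offset s) containing x ∈ ZMod m is
indexed by (x − s).val / L, and the gap of the pair (p₁, p₂) is (p₂ − p₁).val. -/
theorem exists_division_splitting_no_pair (m L q : ℕ) (hm : 0 < m) (hL : 1 ≤ L)
    (hdvd : L ∣ m) (p : Fin q → ZMod m × ZMod m) (b : Fin q → ℕ)
    (hb : ∀ j, b j = (((p j).2 - (p j).1 : ZMod m)).val)
    (hsum : ∑ j, b j < L) :
    ∃ s : Fin L, ∀ j,
      (((p j).1 - ((s : ℕ) : ZMod m)).val) / L =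
        (((p j).2 - ((s : ℕ) : ZMod m)).val) / L := by
  haveI : NeZero m := ⟨hm.ne'⟩
  haveI : NeZero L := ⟨(Nat.pos_of_ne_zero (by omega)).ne'⟩
  have hLpos : 0 < L := hL
  -- the "bad" offsets for pair j
  set bad : Fin q → Finset (Fin L) := fun j =>
    Finset.univ.filter (fun s => (((p j).1 - ((s : ℕ) : ZMod m)).val) / L ≠
        (((p j).2 - ((s : ℕ) : ZMod m)).val) / L) with hbad
  -- key residue lemma: if s is bad for j then the residue of (p₁ - s).val mod L is large
  have hres : ∀ j : Fin q, ∀ s ∈ bad j,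
      L - b j ≤ (((p j).1 - ((s : ℕ) : ZMod m)).val) % L := by
    intro j s hs
    have hbj : b j < L := lt_of_le_of_lt
      (Finset.single_le_sum (f := b) (fun i _ => Nat.zero_le _) (Finset.mem_univ j)) hsum
    rw [hbad, Finset.mem_filter] at hs
    set x := (p j).1 - ((s : ℕ) : ZMod m) with hx
    have hy : (p j).2 - ((s : ℕ) : ZMod m) = x + ((p j).2 - (p j).1) := by ring
    by_contra hcon
    push_neg at hcon
    apply hs.2
    set a := x.val with ha
    have hrb : a % L + b j < L := by omega
    obtain ⟨k, hk⟩ := hdvd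
    -- a + b j < m
    have haL : a % L < L := Nat.mod_lt _ hLpos
    have hasplit : a = L * (a / L) + a % L := (Nat.div_add_mod a L).symm
    have haM : a < m := ZMod.val_lt x
    have hq : a / L + 1 ≤ k := by
      by_contra hqc
      push_neg at hqc
      have : k ≤ a / L := by omega
      have : L * k ≤ L * (a / L) := Nat.mul_le_mul_left L this
      omega
    have habm : a + b j < m := by
      have h1 : L * (a / L + 1) ≤ L * k := Nat.mul_le_mul_left L hq
      have h2 : L * (a / L + 1) = L * (a / L) + L := by ring
      omega
    have hval : ((p j).2 - ((s : ℕ) : ZMod m)).val = a + b j := by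
      rw [hy, ZMod.val_add, ← ha, ← hb j, Nat.mod_eq_of_lt habm]
    rw [hval]
    have hbL : b j % L = b j := Nat.mod_eq_of_lt hbj
    rw [Nat.add_div_eq_of_add_mod_lt (by omega), Nat.div_eq_of_lt hbj, Nat.add_zero]
  -- injectivity of s ↦ (x - s).val % L
  have hinj : ∀ (x : ZMod m) (s₁ s₂ : Fin L),
      (x - ((s₁ : ℕ) : ZMod m)).val % L = (x - ((s₂ : ℕ) : ZMod m)).val % L → s₁ = s₂ := by
    intro x s₁ s₂ h
    have key : ∀ u : ZMod m, u.val % L = (ZMod.castHom hdvd (ZMod L) u).val := by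
      intro u
      rw [ZMod.castHom_apply, ← ZMod.natCast_val, ZMod.val_natCast]
    rw [key, key] at h
    have h2 : ZMod.castHom hdvd (ZMod L) (x - ((s₁ : ℕ) : ZMod m)) =
        ZMod.castHom hdvd (ZMod L) (x - ((s₂ : ℕ) : ZMod m)) := ZMod.val_injective L h
    rw [map_sub, map_sub, map_natCast, map_natCast] at h2
    have h3 : ((s₁ : ℕ) : ZMod L) = ((s₂ : ℕ) : ZMod L) := by
      linear_combination -h2
    have h4 : (s₁ : ℕ) = (s₂ : ℕ) := by
      rw [← ZMod.val_cast_of_lt s₁.isLt, ← ZMod.val_cast_of_lt s₂.isLt, h3]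
    exact Fin.ext h4
  -- each bad set has at most b j elements
  have hcard : ∀ j, (bad j).card ≤ b j := by
    intro j
    have hbj : b j ≤ L := le_of_lt (lt_of_le_of_lt
      (Finset.single_le_sum (f := b) (fun i _ => Nat.zero_le _) (Finset.mem_univ j)) hsum)
    have := Finset.card_le_card_of_injOn
      (f := fun s : Fin L => (((p j).1 - ((s : ℕ) : ZMod m)).val) % L)
      (s := bad j) (t := Finset.Ico (L - b j) L)
      (fun s hs => Finset.mem_Ico.2 ⟨hres j s hs, Nat.mod_lt _ hLpos⟩)
      (fun s₁ _ s₂ _ h => hinj (p j).1 s₁ s₂ h)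
    simpa [Nat.card_Ico, Nat.sub_sub_self hbj] using this
  -- union bound
  have hunion : (Finset.univ.biUnion bad).card < L := by
    calc (Finset.univ.biUnion bad).card ≤ ∑ j, (bad j).card := Finset.card_biUnion_le
      _ ≤ ∑ j, b j := Finset.sum_le_sum fun j _ => hcard j
      _ < L := hsum
  have hne : Finset.univ.biUnion bad ⊂ Finset.univ := by
    rw [Finset.ssubset_univ_iff]
    intro hcontra
    rw [hcontra] at hunion
    simp at hunion
  obtain ⟨s, -, hs⟩ := Finset.exists_of_ssubset hne
  refine ⟨s, fun j => ?_⟩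
  by_contra hc
  exact hs (Finset.mem_biUnion.2 ⟨j, Finset.mem_univ j,
    by rw [hbad]; exact Finset.mem_filter.2 ⟨Finset.mem_univ s, hc⟩⟩)
end
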